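/- arXiv:2507.21355 — 5 statements merged into one kernel-verified Lean document; each statement's English description precedes it below -/
import Mathlib

section
/- With A and \bar{K} as above (A = R[y_1,...,y_{n+1}]/I_2(ψ), \bar{K} the image of I_2(ψ)+(x_n,y_n)), the ideal \bar{K} is generically a complete intersection: for every associated prime p of \bar{K}, the localization \bar{K}_p is the principal ideal generated by the image of x_n. -/
open MvPolynomial

set_option maxHeartbeats 1000000
set_option synthInstance.maxHeartbeats 1000000

noncomputable section

variable (k : Type*) [Field k] (n : ℕ)

/-- `R = k[x₁,...,xₙ]`. -/
abbrev RR := MvPolynomial (Fin n) k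

/-- `B = R[y₁,...,y_{n+1}]`. -/
abbrev BB := MvPolynomial (Fin (n + 1)) (RR k n)

/-- The element `xᵢ` of `B` (a coefficient variable). -/
def xB (i : Fin n) : BB k n := C (X i)

/-- The element `yᵢ` of `B`, for `i = 1, ..., n` (the first `n` of the `y`-variables). -/
def yB (i : Fin n) : BB k n := X i.castSucc

/-- The ideal `I₂(ψ)` of 2×2 minors of the matrix with rows `(x₁,...,xₙ)`, `(y₁,...,yₙ)`. -/
def I2ψ : Ideal (BB k n) :=
  Ideal.span (Set.range fun p : Fin n × Fin n => xB k n p.1 * yB k n p.2 - xB k n p.2 * yB k n p.1)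

/-- `h ∈ B` is bihomogeneous of bidegree `(a, b)`: as a polynomial in the `y`'s it is
homogeneous of degree `b`, and all its coefficients in `R` are homogeneous of degree `a`. -/
def BiHom (h : BB k n) (a b : ℕ) : Prop :=
  h.IsHomogeneous b ∧ ∀ m, (h.coeff m).IsHomogeneous a

/-- The maximal bigraded ideal of `B`, generated by all the variables. -/
def mB : Ideal (BB k n) :=
  Ideal.span (Set.range (xB k n) ∪ Set.range (X : Fin (n + 1) → BB k n))

/-- The ideal `m = (x₁,...,xₙ)` of `B`. -/
def mxB : Ideal (BB k n) := Ideal.span (Set.range (xB k n))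

/-- The height of an ideal. -/
noncomputable def idealHeight {S : Type*} [CommRing S] (I : Ideal S) : WithBot (WithTop ℕ) :=
  ⨅ (p : PrimeSpectrum S) (_ : I ≤ p.asIdeal), ringKrullDim (Localization.AtPrime p.asIdeal)

/-- The (bigraded) quotient `B/L` is Cohen–Macaulay of dimension `e`: its Krull dimension is
`e` and there is a regular sequence of length `e` on `B/L` consisting of elements of the
maximal bigraded ideal. -/
def QuotCM (L : Ideal (BB k n)) (e : ℕ) : Prop :=
  ringKrullDim (BB k n ⧸ L) = e ∧
    ∃ rs : List (BB k n), rs.length = e ∧ (∀ r ∈ rs, r ∈ mB k n) ∧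
      RingTheory.Sequence.IsRegular (BB k n ⧸ L) (rs.map (Ideal.Quotient.mk L))

/-- The quotient `A = B/I₂(ψ)`, isomorphic to `R(fm)[y_{n+1}]`. -/
abbrev AA := BB k n ⧸ I2ψ k n

/-- The quotient map `B → A`. -/
def πA : BB k n →+* AA k n := Ideal.Quotient.mk (I2ψ k n)

/-- The index of the last `x`-variable `xₙ` (as an element of `Fin n`, assuming `n ≥ 1`,
realized via `n-1 < n` when `n = m+1`; for `n = 0` this is junk). -/
def lastx (hn : 0 < n) : Fin n := ⟨n - 1, by omega⟩

/-! Since `n ≥ 2`, the variable `x₁` is a nonzerodivisor on `A/K̄`, so it lies in no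
associated prime `p` and becomes a unit in `A_p`; the minor `x₁yₙ - xₙy₁` then puts `yₙ`
into `xₙA_p`.

To see that `x₁` is regular, map `B` to `k[z₁,…,zₙ,u,v,w]` by `xᵢ ↦ u zᵢ`, `yᵢ ↦ v zᵢ`,
`y_{n+1} ↦ w`. This kills `I₂(ψ)`, and modulo `I₂(ψ)` a monomial in the `x`'s and `y`'s
depends only on its image (an `x`-index and a `y`-index can be exchanged), which gives a
`k`-linear left inverse on `A`. Under this map `K̄` lands in `(zₙ)`, and every element of `A`
whose image is divisible by `zₙ` lies in `K̄`; as `zₙ` is prime and does not divide `u z₁`,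
`x₁ a ∈ K̄` forces `a ∈ K̄`. -/

theorem IsSMulRegular.notMem_of_mem_associatedPrimes {R M : Type*} [CommSemiring R]
    [IsNoetherianRing R] [AddCommMonoid M] [Module R M] {a : R} (ha : IsSMulRegular M a)
    {p : Ideal R} (hp : p ∈ associatedPrimes R M) : a ∉ p := by
  intro hap
  have hzd : a ∈ ⋃ q ∈ associatedPrimes R M, (q : Set R) := Set.mem_biUnion hp hap
  rw [biUnion_associatedPrimes_eq_zero_divisors] at hzd
  obtain ⟨x, hx, hax⟩ := hzd
  exact hx (ha (hax.trans (smul_zero a).symm))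

theorem Localization.AtPrime.map_span_pair_eq {R : Type*} [CommRing R] (p : Ideal R) [p.IsPrime]
    {a b c u : R} (hu : u ∉ p) (h : u * b = a * c) :
    (Ideal.span {a, b}).map (algebraMap R (Localization.AtPrime p)) =
      (Ideal.span {a}).map (algebraMap R (Localization.AtPrime p)) := by
  have hu' := (IsLocalization.AtPrime.isUnit_to_map_iff (Localization.AtPrime p) p u).mpr hu
  rw [Ideal.map_span, Ideal.map_span, Set.image_pair, Set.image_singleton]
  refine le_antisymm (Ideal.span_le.mpr ?_)
    (Ideal.span_mono (Set.singleton_subset_iff.mpr (Set.mem_insert _ _)))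
  rintro _ (rfl | rfl)
  · exact Ideal.subset_span rfl
  · rw [SetLike.mem_coe, ← Ideal.unit_mul_mem_iff_mem _ hu', ← map_mul, h, map_mul]
    exact Ideal.mul_mem_right _ _ (Ideal.subset_span rfl)

theorem MvPolynomial.monomial_toFinsupp_one {σ R : Type*} [CommSemiring R] [DecidableEq σ]
    (M : Multiset σ) : monomial (Multiset.toFinsupp M) (1 : R) = (M.map X).prod := by
  induction M using Multiset.induction_on with
  | empty => simp
  | cons a M ih =>
    rw [← Multiset.singleton_add, Multiset.toFinsupp_add, Multiset.toFinsupp_singleton,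
      monomial_single_add, ih, pow_one, Multiset.map_add, Multiset.prod_add,
      Multiset.map_singleton, Multiset.prod_singleton]

theorem πA_xB_mul_yB_comm (i j : Fin n) :
    πA k n (xB k n i) * πA k n (yB k n j) = πA k n (xB k n j) * πA k n (yB k n i) := by
  rw [← map_mul, ← map_mul]
  exact Ideal.Quotient.eq.mpr (Ideal.subset_span ⟨(i, j), rfl⟩)

def xyMonomial (E F : Multiset (Fin n)) (c : ℕ) : BB k n :=
  (E.map (xB k n)).prod * (F.map (yB k n)).prod * X (Fin.last n) ^ c

theorem xyMonomial_cons_left (i : Fin n) (E F : Multiset (Fin n)) (c : ℕ) :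
    xyMonomial k n (i ::ₘ E) F c = xB k n i * xyMonomial k n E F c := by
  simp only [xyMonomial, Multiset.map_cons, Multiset.prod_cons]; ring

theorem xyMonomial_cons_right (i : Fin n) (E F : Multiset (Fin n)) (c : ℕ) :
    xyMonomial k n E (i ::ₘ F) c = yB k n i * xyMonomial k n E F c := by
  simp only [xyMonomial, Multiset.map_cons, Multiset.prod_cons]; ring

theorem xyMonomial_succ (E F : Multiset (Fin n)) (c : ℕ) :
    xyMonomial k n E F (c + 1) = X (Fin.last n) * xyMonomial k n E F c := by
  simp only [xyMonomial, pow_succ]; ring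

theorem πA_xyMonomial_swap (i j : Fin n) (E F : Multiset (Fin n)) (c : ℕ) :
    πA k n (xyMonomial k n (j ::ₘ E) (i ::ₘ F) c) =
      πA k n (xyMonomial k n (i ::ₘ E) (j ::ₘ F) c) := by
  simp only [xyMonomial_cons_left, xyMonomial_cons_right, map_mul]
  linear_combination πA k n (xyMonomial k n E F c) * πA_xB_mul_yB_comm k n j i

theorem exists_πA_xyMonomial_eq_cons {i : Fin n} {E F : Multiset (Fin n)} (c : ℕ)
    (hi : i ∈ E + F) (hE : E ≠ 0) :
    ∃ E' F', πA k n (xyMonomial k n E F c) = πA k n (xyMonomial k n (i ::ₘ E') F' c) ∧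
      E + F = i ::ₘ (E' + F') ∧ Multiset.card E = Multiset.card E' + 1 := by
  rcases Multiset.mem_add.mp hi with hiE | hiF
  · obtain ⟨E', rfl⟩ := Multiset.exists_cons_of_mem hiE
    exact ⟨E', F, rfl, Multiset.cons_add _ _ _, Multiset.card_cons _ _⟩
  · obtain ⟨F', rfl⟩ := Multiset.exists_cons_of_mem hiF
    obtain ⟨j, hj⟩ := Multiset.exists_mem_of_ne_zero hE
    obtain ⟨E', rfl⟩ := Multiset.exists_cons_of_mem hj
    refine ⟨E', j ::ₘ F', πA_xyMonomial_swap k n i j E' F' c, ?_, Multiset.card_cons _ _⟩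
    simp only [Multiset.cons_add, Multiset.add_cons]

theorem πA_xyMonomial_eq_of_add_eq {E F E' F' : Multiset (Fin n)} (c : ℕ)
    (h : E + F = E' + F') (hcard : Multiset.card E = Multiset.card E') :
    πA k n (xyMonomial k n E F c) = πA k n (xyMonomial k n E' F' c) := by
  induction E using Multiset.induction_on generalizing F E' F' with
  | empty =>
    obtain rfl : E' = 0 := Multiset.card_eq_zero.mp hcard.symm
    rw [zero_add, zero_add] at h
    rw [h]
  | cons i E ih =>
    have hE' : E' ≠ 0 := by
      rintro rfl
      simp at hcard
    obtain ⟨E'', F'', hπ, hsum, hcard'⟩ := exists_πA_xyMonomial_eq_cons k n c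
      (h ▸ Multiset.mem_add.mpr (.inl (Multiset.mem_cons_self i E))) hE'
    rw [hπ, xyMonomial_cons_left, xyMonomial_cons_left, map_mul, map_mul]
    refine congrArg _ (ih ?_ ?_)
    · rwa [← h, Multiset.cons_add, Multiset.cons_inj_right] at hsum
    · simpa [hcard'] using hcard

abbrev ParamRing := MvPolynomial (Fin n ⊕ Fin 3) k

def param : BB k n →ₐ[k] ParamRing k n where
  toRingHom := eval₂Hom (aeval fun i => X (.inr 0) * X (.inl i) : RR k n →ₐ[k] ParamRing k n)
    (Fin.lastCases (X (.inr 2)) fun i => X (.inr 1) * X (.inl i))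
  commutes' c := by simp

theorem param_xB (i : Fin n) : param k n (xB k n i) = X (.inr 0) * X (.inl i) := by
  simp [param, xB]

theorem param_yB (i : Fin n) : param k n (yB k n i) = X (.inr 1) * X (.inl i) := by
  simp [param, yB]

theorem param_X_last : param k n (X (Fin.last n)) = X (.inr 2) := by
  simp [param]

def paramExp (E F : Multiset (Fin n)) (c : ℕ) : Fin n ⊕ Fin 3 →₀ ℕ :=
  Multiset.toFinsupp (.replicate (Multiset.card E) (.inr 0) + .replicate (Multiset.card F) (.inr 1)
    + (E + F).map .inl + .replicate c (.inr 2))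

theorem param_xyMonomial (E F : Multiset (Fin n)) (c : ℕ) :
    param k n (xyMonomial k n E F c) = monomial (paramExp n E F c) 1 := by
  simp only [xyMonomial, paramExp, monomial_toFinsupp_one, map_mul, map_pow, map_multiset_prod,
    Multiset.map_map, Function.comp_def, param_xB, param_yB, param_X_last, Multiset.prod_map_mul,
    Multiset.map_add, Multiset.prod_add, Multiset.map_replicate, Multiset.prod_replicate,
    Multiset.map_const']
  ring

theorem paramExp_apply_inl (E F : Multiset (Fin n)) (c : ℕ) (i : Fin n) :
    paramExp n E F c (.inl i) = Multiset.count i (E + F) := by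
  simp [paramExp, Multiset.count_replicate, Multiset.count_map_eq_count' _ _ Sum.inl_injective]

theorem paramExp_apply_inr (E F : Multiset (Fin n)) (c : ℕ) (t : Fin 3) :
    paramExp n E F c (.inr t) =
      if t = 0 then Multiset.card E else if t = 1 then Multiset.card F else c := by
  fin_cases t <;> simp [paramExp, Multiset.count_replicate]

theorem eq_of_paramExp_eq {E F E' F' : Multiset (Fin n)} {c c' : ℕ}
    (h : paramExp n E F c = paramExp n E' F' c') :
    E + F = E' + F' ∧ Multiset.card E = Multiset.card E' ∧ c = c' := by
  refine ⟨Multiset.ext.mpr fun i => ?_, ?_, ?_⟩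
  · simpa only [paramExp_apply_inl] using DFunLike.congr_fun h (.inl i)
  · simpa [paramExp_apply_inr] using DFunLike.congr_fun h (.inr 0)
  · simpa [paramExp_apply_inr] using DFunLike.congr_fun h (.inr 2)

open Classical in
/-- By `πA_xyMonomial_eq_of_add_eq` the chosen preimage does not matter; the value `0` off the
image of `paramExp` is never used. -/
def monomialLift (d : Fin n ⊕ Fin 3 →₀ ℕ) : AA k n :=
  if h : ∃ q : Multiset (Fin n) × Multiset (Fin n) × ℕ, paramExp n q.1 q.2.1 q.2.2 = d then
    πA k n (xyMonomial k n h.choose.1 h.choose.2.1 h.choose.2.2)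
  else 0

theorem monomialLift_paramExp (E F : Multiset (Fin n)) (c : ℕ) :
    monomialLift k n (paramExp n E F c) = πA k n (xyMonomial k n E F c) := by
  have h : ∃ q : Multiset (Fin n) × Multiset (Fin n) × ℕ,
      paramExp n q.1 q.2.1 q.2.2 = paramExp n E F c := ⟨(E, F, c), rfl⟩
  obtain ⟨hsum, hcard, hc⟩ := eq_of_paramExp_eq n h.choose_spec
  rw [monomialLift, dif_pos h, hc]
  exact πA_xyMonomial_eq_of_add_eq k n _ hsum hcard

def paramSection : ParamRing k n →ₗ[k] AA k n :=
  (basisMonomials _ k).constr k (monomialLift k n)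

theorem paramSection_monomial (d : Fin n ⊕ Fin 3 →₀ ℕ) (a : k) :
    paramSection k n (monomial d a) = a • monomialLift k n d := by
  have h : monomial d a = a • basisMonomials _ k d := by
    rw [coe_basisMonomials, smul_monomial, smul_eq_mul, mul_one]
  rw [h, map_smul, paramSection, Module.Basis.constr_basis]

theorem span_xyMonomial :
    Submodule.span k {m | ∃ E F c, xyMonomial k n E F c = m} = ⊤ := by
  set S := Submodule.span k {m | ∃ E F c, xyMonomial k n E F c = m}
  have hmem (E F c) : xyMonomial k n E F c ∈ S := Submodule.subset_span ⟨E, F, c, rfl⟩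
  suffices h : ∀ w E F c, w * xyMonomial k n E F c ∈ S by
    refine eq_top_iff.mpr fun w _ => ?_
    simpa [xyMonomial] using h w 0 0 0
  intro w
  induction w using MvPolynomial.induction_on with
  | C a =>
    induction a using MvPolynomial.induction_on with
    | C a =>
      intro E F c
      simpa [Algebra.smul_def] using S.smul_mem a (hmem E F c)
    | add a b ha hb =>
      intro E F c
      simpa [add_mul] using S.add_mem (ha E F c) (hb E F c)
    | mul_X a i ha =>
      intro E F c
      simpa [mul_assoc, xyMonomial_cons_left, xB] using ha (i ::ₘ E) F c
  | add p q hp hq =>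
    intro E F c
    simpa [add_mul] using S.add_mem (hp E F c) (hq E F c)
  | mul_X p j hp =>
    intro E F c
    induction j using Fin.lastCases with
    | last => simpa [mul_assoc, xyMonomial_succ] using hp E F (c + 1)
    | cast i => simpa [mul_assoc, xyMonomial_cons_right, yB] using hp E (i ::ₘ F) c

theorem paramSection_param (w : BB k n) : paramSection k n (param k n w) = πA k n w := by
  have h : paramSection k n ∘ₗ (param k n).toLinearMap = (Ideal.Quotient.mkₐ k _).toLinearMap :=
    LinearMap.ext_on (span_xyMonomial k n) <| by
      rintro _ ⟨E, F, c, rfl⟩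
      simp [param_xyMonomial, paramSection_monomial, monomialLift_paramExp, πA]
  exact LinearMap.congr_fun h w

def Kbar (i : Fin n) : Ideal (AA k n) :=
  Ideal.map (πA k n) (Ideal.span {xB k n i, yB k n i})

theorem πA_xyMonomial_mem_Kbar {i : Fin n} {E F : Multiset (Fin n)} (c : ℕ) (h : i ∈ E + F) :
    πA k n (xyMonomial k n E F c) ∈ Kbar k n i := by
  refine Ideal.mem_map_of_mem _ ?_
  rcases Multiset.mem_add.mp h with hE | hF
  · obtain ⟨E', rfl⟩ := Multiset.exists_cons_of_mem hE
    rw [xyMonomial_cons_left]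
    exact Ideal.mul_mem_right _ _ (Ideal.subset_span (Set.mem_insert _ _))
  · obtain ⟨F', rfl⟩ := Multiset.exists_cons_of_mem hF
    rw [xyMonomial_cons_right]
    exact Ideal.mul_mem_right _ _ (Ideal.subset_span (Set.mem_insert_of_mem _ rfl))

theorem monomialLift_mem_Kbar {i : Fin n} {d : Fin n ⊕ Fin 3 →₀ ℕ} (h : d (.inl i) ≠ 0) :
    monomialLift k n d ∈ Kbar k n i := by
  by_cases hd : ∃ q : Multiset (Fin n) × Multiset (Fin n) × ℕ, paramExp n q.1 q.2.1 q.2.2 = d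
  · obtain ⟨⟨E, F, c⟩, rfl⟩ := hd
    rw [monomialLift_paramExp]
    refine πA_xyMonomial_mem_Kbar k n c (Multiset.count_ne_zero.mp ?_)
    rwa [paramExp_apply_inl] at h
  · rw [monomialLift, dif_neg hd]
    exact zero_mem _

theorem paramSection_mem_Kbar {i : Fin n} {t : ParamRing k n} (h : X (.inl i) ∣ t) :
    paramSection k n t ∈ Kbar k n i := by
  obtain ⟨t, rfl⟩ := h
  induction t using MvPolynomial.induction_on' with
  | monomial d a =>
    rw [X, monomial_mul, one_mul, paramSection_monomial]
    exact Submodule.smul_of_tower_mem _ a (monomialLift_mem_Kbar k n (by simp))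
  | add p q hp hq => simpa [mul_add] using add_mem hp hq

theorem X_dvd_param_of_πA_mem_Kbar {i : Fin n} {w : BB k n} (h : πA k n w ∈ Kbar k n i) :
    X (.inl i) ∣ param k n w := by
  rw [Kbar, πA, Ideal.mem_quotient_iff_mem_sup] at h
  rw [← Ideal.mem_span_singleton, ← Ideal.mem_comap]
  refine (sup_le (Ideal.span_le.mpr ?_) (Ideal.span_le.mpr ?_) : _ ≤ Ideal.comap _ _) h
  · rintro _ (rfl | rfl) <;>
      simp [param_xB, param_yB, Ideal.mem_span_singleton]
  · rintro _ ⟨⟨a, b⟩, rfl⟩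
    simp only [SetLike.mem_coe, Ideal.mem_comap, map_sub, map_mul, param_xB, param_yB]
    exact Ideal.mem_span_singleton.mpr ⟨0, by ring⟩

theorem mem_Kbar_of_πA_xB_mul_mem {i j : Fin n} (hij : j ≠ i) {a : AA k n}
    (h : πA k n (xB k n j) * a ∈ Kbar k n i) : a ∈ Kbar k n i := by
  obtain ⟨w, rfl⟩ := Ideal.Quotient.mk_surjective a
  have hdvd := X_dvd_param_of_πA_mem_Kbar k n ((map_mul (πA k n) _ w).symm ▸ h)
  rw [map_mul, param_xB] at hdvd
  have hX : ¬ (X (.inl i) : ParamRing k n) ∣ X (.inr 0) * X (.inl j) := by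
    simp [X_dvd_mul_iff, hij.symm]
  change πA k n w ∈ _
  rw [← paramSection_param]
  exact paramSection_mem_Kbar k n ((X_dvd_mul_iff.mp hdvd).resolve_left hX)

theorem πA_xB_notMem_of_mem_associatedPrimes {i j : Fin n} (hij : j ≠ i) {p : Ideal (AA k n)}
    (hp : p ∈ associatedPrimes (AA k n) (AA k n ⧸ Kbar k n i)) : πA k n (xB k n j) ∉ p := by
  refine IsSMulRegular.notMem_of_mem_associatedPrimes (fun x y hxy => ?_) hp
  obtain ⟨x, rfl⟩ := Submodule.Quotient.mk_surjective _ x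
  obtain ⟨y, rfl⟩ := Submodule.Quotient.mk_surjective _ y
  dsimp only at hxy
  rw [← Submodule.Quotient.mk_smul, ← Submodule.Quotient.mk_smul, Submodule.Quotient.eq] at hxy
  rw [Submodule.Quotient.eq]
  exact mem_Kbar_of_πA_xB_mul_mem k n hij (by simpa [mul_sub] using hxy)

/-- `K̄` is generically a complete intersection: at every associated prime `p`
of `A/K̄`, the localization of `K̄` is the principal ideal generated by the image of `xₙ`. -/
theorem Kbar_generically_CI
    (hn : 2 ≤ n)
    (p : Ideal (AA k n))
    (hp : p ∈ associatedPrimes (AA k n)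
      (AA k n ⧸ Ideal.map (πA k n)
        (Ideal.span {xB k n (lastx n (by omega)), yB k n (lastx n (by omega))}))) :
    haveI : p.IsPrime := hp.1
    Ideal.map (@algebraMap (AA k n) (@Localization.AtPrime (AA k n) (Ideal.Quotient.commSemiring _) p _) (Ideal.Quotient.commSemiring _) _ _)
        (Ideal.map (πA k n)
          (Ideal.span {xB k n (lastx n (by omega)), yB k n (lastx n (by omega))})) =
      Ideal.map (@algebraMap (AA k n) (@Localization.AtPrime (AA k n) (Ideal.Quotient.commSemiring _) p _) (Ideal.Quotient.commSemiring _) _ _)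
        (Ideal.span {πA k n (xB k n (lastx n (by omega)))}) := by
  have : p.IsPrime := hp.1
  have hne : (⟨0, by omega⟩ : Fin n) ≠ lastx n (by omega) := by
    simp only [lastx, ne_eq, Fin.mk.injEq]
    omega
  have hx : πA k n (xB k n ⟨0, by omega⟩) ∉ p :=
    πA_xB_notMem_of_mem_associatedPrimes k n hne hp
  refine (congrArg _ (Ideal.map_span (πA k n) _)).trans ?_
  rw [Set.image_pair]
  exact Localization.AtPrime.map_span_pair_eq (R := AA k n) p hx (πA_xB_mul_yB_comm k n _ _)

end
end

section
/- Let h_1,...,h_d be a downgraded sequence starting from h_1 = h (a bihomogeneous polynomial of bidegree (d−1,1) with h ∉ I_2(ψ)), where h_{i+1} = [y_1 ... y_n]·∂h_i for some column ∂h_i with [x_1 ... x_n]·∂h_i = h_i. Then h_i ≠ 0 for all 1 ≤ i ≤ d, and h_i is bihomogeneous of bidegree (d−i, i). -/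
/-!
Let `φ = paramHom : B → R[t][u]` send `xᵢ ↦ xᵢ`, `yᵢ ↦ t xᵢ`, `y_{n+1} ↦ u`. If
`q = [y₁ … yₙ]·c` is a downgrade of `p = [x₁ … xₙ]·c`, then `φ q = t · φ p`, so `φ (h i) ≠ 0`
propagates along the sequence. It holds for `h 0` because in `y`-degree one the kernel of `φ` lies
in `I₂(ψ)`: a linear form `∑ gᵢ yᵢ + a y_{n+1}` in the kernel has `a = 0` and `∑ gᵢ xᵢ = 0`, so
`(gᵢ)` is a combination of Koszul syzygies `xⱼ eᵢ - xᵢ eⱼ`, which turn `∑ gᵢ yᵢ` into a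
combination of `2 × 2` minors. The bidegrees follow from `p = ∑ xᵢ cᵢ ≠ 0`, which pins down the
common bidegree of the `cᵢ`.
-/

open MvPolynomial

set_option maxHeartbeats 1000000
set_option synthInstance.maxHeartbeats 1000000

noncomputable section

variable (k : Type*) [Field k] (n : ℕ)

/-- `q` is a downgrade of `p`: there is a column `c` of bihomogeneous entries, all of the
same bidegree, with `[x₁ … xₙ]·c = p` and `[y₁ … yₙ]·c = q`. -/
def IsDowngrade (p q : BB k n) : Prop :=
  ∃ c : Fin n → BB k n, (∃ a b : ℕ, ∀ i, BiHom k n (c i) a b) ∧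
    (∑ i, xB k n i * c i) = p ∧ (∑ i, yB k n i * c i) = q

/-- `h 0, h 1, …, h (d-1)` is a downgraded sequence (of length `d`, indexed from `0`). -/
def IsDowngradedSeq (d : ℕ) (h : ℕ → BB k n) : Prop :=
  ∀ i : ℕ, i + 1 < d → IsDowngrade k n (h i) (h (i + 1))

namespace MvPolynomial

variable {σ R : Type*} [CommRing R] [DecidableEq σ]

def killVar (M : σ) : MvPolynomial σ R →ₐ[R] MvPolynomial σ R :=
  aeval (Function.update X M 0)

theorem killVar_X_self (M : σ) : killVar M (X M : MvPolynomial σ R) = 0 := by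
  simp [killVar]

theorem killVar_X_of_ne {M j : σ} (hj : j ≠ M) : killVar M (X j : MvPolynomial σ R) = X j := by
  simp [killVar, Function.update_of_ne hj]

theorem X_dvd_sub_killVar (M : σ) (p : MvPolynomial σ R) : X M ∣ p - killVar M p := by
  induction p using MvPolynomial.induction_on with
  | C a => simp [killVar]
  | add p q hp hq => simpa [add_sub_add_comm] using dvd_add hp hq
  | mul_X p j hp =>
    by_cases hj : j = M
    · subst hj
      simp [killVar_X_self]
    · rw [map_mul, killVar_X_of_ne hj, ← sub_mul]
      exact hp.mul_right _

def koszulSyzygies (σ R : Type*) [CommRing R] [DecidableEq σ] :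
    Submodule (MvPolynomial σ R) (σ → MvPolynomial σ R) :=
  Submodule.span _ (Set.range fun ij : σ × σ => Pi.single ij.1 (X ij.2) - Pi.single ij.2 (X ij.1))

theorem single_sub_single_mem_koszulSyzygies (i j : σ) :
    (Pi.single i (X j) - Pi.single j (X i) : σ → MvPolynomial σ R) ∈ koszulSyzygies σ R :=
  Submodule.subset_span ⟨(i, j), rfl⟩

def killVarSyzygy (M : σ) (g : σ → MvPolynomial σ R) : σ → MvPolynomial σ R :=
  Function.update (fun j => killVar M (g j)) M 0

theorem killVarSyzygy_mul_X (M : σ) (g : σ → MvPolynomial σ R) (j : σ) :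
    killVarSyzygy M g j * X j = killVar M (g j * X j) := by
  by_cases hj : j = M
  · subst hj
    simp [killVarSyzygy, killVar_X_self]
  · simp [killVarSyzygy, hj, killVar_X_of_ne hj]

variable [Fintype σ]

theorem sum_killVarSyzygy_mul_X {g : σ → MvPolynomial σ R} (hg : ∑ j, g j * X j = 0) (M : σ) :
    ∑ j, killVarSyzygy M g j * X j = 0 := by
  simp_rw [killVarSyzygy_mul_X, ← map_sum, hg, map_zero]

theorem sub_killVarSyzygy_mem_koszulSyzygies {g : σ → MvPolynomial σ R}
    (hg : ∑ j, g j * X j = 0) (M : σ) : g - killVarSyzygy M g ∈ koszulSyzygies σ R := by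
  -- With `gⱼ = killVar M gⱼ + X M * rⱼ`, the syzygy forces `killVar M g_M = -∑ rⱼ Xⱼ`, hence
  -- `g - killVarSyzygy M g = ∑ rⱼ • (X M eⱼ - Xⱼ e_M)`.
  choose r hr using fun j => X_dvd_sub_killVar M (g j)
  have hterm : ∀ j, g j * X j = killVarSyzygy M g j * X j
      + Pi.single M (killVar M (g M)) j * X j + X M * (r j * X j) := by
    intro j
    by_cases hj : j = M
    · subst hj
      simp only [killVarSyzygy, Function.update_self, Pi.single_eq_same]
      linear_combination X j * hr j
    · simp only [killVarSyzygy, Function.update_of_ne hj, Pi.single_eq_of_ne hj]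
      linear_combination X j * hr j
  have hgM : killVar M (g M) = -∑ j, r j * X j := isRegular_X.left <| by
    have := hg
    simp_rw [hterm, Finset.sum_add_distrib, sum_killVarSyzygy_mul_X hg, ← Finset.mul_sum] at this
    simp only [Pi.single_apply, ite_mul, zero_mul, Finset.sum_ite_eq', Finset.mem_univ,
      if_true, zero_add] at this
    linear_combination this
  suffices g - killVarSyzygy M g = ∑ j, r j • (Pi.single j (X M) - Pi.single M (X j)) by
    rw [this]
    exact Submodule.sum_mem _ fun j _ =>
      Submodule.smul_mem _ _ (single_sub_single_mem_koszulSyzygies j M)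
  funext l
  simp only [Pi.sub_apply, Finset.sum_apply, Pi.smul_apply, smul_eq_mul, Pi.single_apply,
    mul_sub, Finset.sum_sub_distrib]
  by_cases hl : l = M
  · subst hl
    simp only [killVarSyzygy, Function.update_self, sub_zero, mul_ite, mul_zero,
      Finset.sum_ite_eq, Finset.mem_univ, if_true]
    linear_combination hr l + hgM
  · simp only [killVarSyzygy, Function.update_of_ne hl, mul_ite, mul_zero, Finset.sum_ite_eq,
      Finset.mem_univ, if_true, if_neg hl, Finset.sum_const_zero, sub_zero]
    linear_combination hr l

theorem mem_koszulSyzygies_of_sum_mul_X_eq_zero {g : σ → MvPolynomial σ R}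
    (hg : ∑ j, g j * X j = 0) : g ∈ koszulSyzygies σ R := by
  suffices ∀ s : Finset σ, ∀ g : σ → MvPolynomial σ R, (∀ j ∉ s, g j = 0) →
      ∑ j, g j * X j = 0 → g ∈ koszulSyzygies σ R from
    this Finset.univ g (fun j hj => absurd (Finset.mem_univ j) hj) hg
  intro s
  induction s using Finset.induction_on with
  | empty =>
    intro g hvan _
    have : g = 0 := by
      funext j
      exact hvan j (Finset.notMem_empty j)
    exact this ▸ zero_mem _
  | insert M s _ ih =>
    intro g hvan hg
    have hvan' : ∀ j ∉ s, killVarSyzygy M g j = 0 := by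
      intro j hj
      by_cases hjM : j = M
      · simp [killVarSyzygy, hjM]
      · simp [killVarSyzygy, hjM, hvan j (by simp [hjM, hj])]
    rw [← add_sub_cancel (killVarSyzygy M g) g]
    exact add_mem (ih _ hvan' (sum_killVarSyzygy_mul_X hg M))
      (sub_killVarSyzygy_mem_koszulSyzygies hg M)

end MvPolynomial

section

variable {k n}

theorem sum_C_mul_yB_mem_I2ψ {g : Fin n → RR k n} (hg : ∑ i, g i * X i = 0) :
    ∑ i, C (g i) * yB k n i ∈ I2ψ k n := by
  let Φ : (Fin n → RR k n) →ₗ[RR k n] BB k n := Fintype.linearCombination (RR k n) (yB k n)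
  have hΦ : koszulSyzygies (Fin n) k ≤ Submodule.comap Φ ((I2ψ k n).restrictScalars (RR k n)) := by
    rw [koszulSyzygies, Submodule.span_le]
    rintro _ ⟨⟨i, j⟩, rfl⟩
    have hminor : xB k n j * yB k n i - xB k n i * yB k n j ∈ I2ψ k n :=
      Ideal.subset_span ⟨(j, i), rfl⟩
    simpa [Φ, Fintype.linearCombination_apply_single, ← C_mul', xB] using hminor
  simpa [Φ, Fintype.linearCombination_apply, C_mul'] using
    hΦ (mem_koszulSyzygies_of_sum_mul_X_eq_zero hg)

theorem exists_eq_sum_C_mul_yB_add {p : BB k n} (hp : p.IsHomogeneous 1) :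
    ∃ (g : Fin n → RR k n) (a : RR k n), p = ∑ i, C (g i) * yB k n i + C a * X (Fin.last n) := by
  have hspan : p ∈ Submodule.span (RR k n) (Set.range X) := by
    rw [← homogeneousSubmodule_one_eq_span_X]
    exact (mem_homogeneousSubmodule _ _).2 hp
  obtain ⟨c, rfl⟩ := (Submodule.mem_span_range_iff_exists_fun _).1 hspan
  exact ⟨fun i => c i.castSucc, c (Fin.last n), by simp [Fin.sum_univ_castSucc, C_mul', yB]⟩

variable (k n) in
/-- `Polynomial (Polynomial R)` is `R[t][u]`, with `t` the inner variable. -/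
def paramHom : BB k n →ₐ[RR k n] Polynomial (Polynomial (RR k n)) :=
  aeval (Fin.lastCases Polynomial.X fun i => Polynomial.C (Polynomial.X * Polynomial.C (X i)))

theorem paramHom_C (r : RR k n) : paramHom k n (C r) = Polynomial.C (Polynomial.C r) := by
  simp [paramHom]

theorem paramHom_yB (i : Fin n) :
    paramHom k n (yB k n i) = Polynomial.C Polynomial.X * paramHom k n (xB k n i) := by
  rw [xB, paramHom_C, ← map_mul]
  simp [paramHom, yB]

theorem paramHom_X_last : paramHom k n (X (Fin.last n)) = Polynomial.X := by
  simp [paramHom]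

theorem mem_I2ψ_of_paramHom_eq_zero {p : BB k n} (hp : p.IsHomogeneous 1)
    (h0 : paramHom k n p = 0) : p ∈ I2ψ k n := by
  obtain ⟨g, a, rfl⟩ := exists_eq_sum_C_mul_yB_add hp
  have hparam : paramHom k n (∑ i, C (g i) * yB k n i + C a * X (Fin.last n)) =
      Polynomial.C (Polynomial.C (∑ i, g i * X i) * Polynomial.X) +
        Polynomial.C (Polynomial.C a) * Polynomial.X := by
    simp only [map_add, map_sum, map_mul, paramHom_C, paramHom_yB, xB, paramHom_X_last]
    congr 1
    simp only [Finset.sum_mul]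
    exact Finset.sum_congr rfl fun i _ => by ring
  rw [hparam] at h0
  have ha : a = 0 := by simpa using congrArg (Polynomial.coeff · 1) h0
  have hg : ∑ i, g i * X i = 0 := by
    rw [ha, map_zero, map_zero, zero_mul, add_zero, Polynomial.C_eq_zero, mul_eq_zero,
      Polynomial.C_eq_zero] at h0
    exact h0.resolve_right Polynomial.X_ne_zero
  simpa [ha] using sum_C_mul_yB_mem_I2ψ hg

theorem BiHom.sum {ι : Type*} {s : Finset ι} {f : ι → BB k n} {a b : ℕ}
    (hf : ∀ i ∈ s, BiHom k n (f i) a b) : BiHom k n (∑ i ∈ s, f i) a b := by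
  refine ⟨IsHomogeneous.sum _ _ _ fun i hi => (hf i hi).1, fun m => ?_⟩
  rw [coeff_sum]
  exact IsHomogeneous.sum _ _ _ fun i hi => (hf i hi).2 m

theorem BiHom.xB_mul {c : BB k n} {a b : ℕ} (hc : BiHom k n c a b) (i : Fin n) :
    BiHom k n (xB k n i * c) (a + 1) b := by
  refine ⟨by simpa [xB] using (isHomogeneous_C _ (X i)).mul hc.1, fun m => ?_⟩
  rw [xB, coeff_C_mul, add_comm a]
  exact (isHomogeneous_X k i).mul (hc.2 m)

theorem BiHom.yB_mul {c : BB k n} {a b : ℕ} (hc : BiHom k n c a b) (i : Fin n) :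
    BiHom k n (yB k n i * c) a (b + 1) := by
  refine ⟨by simpa [yB, add_comm] using (isHomogeneous_X _ _).mul hc.1, fun m => ?_⟩
  rw [yB, mul_comm, coeff_mul_X']
  split_ifs
  exacts [hc.2 _, isHomogeneous_zero _ _ _]

theorem BiHom.inj {p : BB k n} (hp : p ≠ 0) {a b a' b' : ℕ}
    (h : BiHom k n p a b) (h' : BiHom k n p a' b') : a = a' ∧ b = b' := by
  obtain ⟨m, hm⟩ := ne_zero_iff.mp hp
  exact ⟨(h.2 m).inj_right (h'.2 m) hm, h.1.inj_right h'.1 hp⟩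

theorem IsDowngrade.paramHom_eq {p q : BB k n} (hpq : IsDowngrade k n p q) :
    paramHom k n q = Polynomial.C Polynomial.X * paramHom k n p := by
  obtain ⟨c, -, rfl, rfl⟩ := hpq
  simp only [map_sum, map_mul, paramHom_yB, Finset.mul_sum, mul_assoc]

theorem IsDowngrade.biHom {p q : BB k n} (hpq : IsDowngrade k n p q) (hp : p ≠ 0) {a b : ℕ}
    (hbi : BiHom k n p a b) : BiHom k n q (a - 1) (b + 1) := by
  obtain ⟨c, ⟨a', b', hc⟩, rfl, rfl⟩ := hpq
  obtain ⟨rfl, rfl⟩ := (BiHom.sum fun i _ => (hc i).xB_mul i).inj hp hbi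
  simpa using BiHom.sum fun i _ => (hc i).yB_mul i

end

theorem downgraded_sequence_nonzero_bidegree
    (d : ℕ)
    (h : ℕ → BB k n) (hbi : BiHom k n (h 0) (d - 1) 1) (hnot : h 0 ∉ I2ψ k n)
    (hseq : IsDowngradedSeq k n d h) :
    ∀ i : ℕ, i < d → h i ≠ 0 ∧ BiHom k n (h i) (d - 1 - i) (i + 1) := by
  have key : ∀ i < d, paramHom k n (h i) ≠ 0 ∧ BiHom k n (h i) (d - 1 - i) (i + 1) := by
    intro i
    induction i with
    | zero =>
      exact fun _ => ⟨fun h0 => hnot (mem_I2ψ_of_paramHom_eq_zero hbi.1 h0), by simpa using hbi⟩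
    | succ i ih =>
      intro hi
      obtain ⟨hparam, hbi⟩ := ih (by omega)
      have hne : h i ≠ 0 := fun h0 => hparam (by rw [h0, map_zero])
      refine ⟨?_, by simpa [Nat.sub_sub, add_assoc] using (hseq i hi).biHom hne hbi⟩
      rw [(hseq i hi).paramHom_eq]
      exact mul_ne_zero (Polynomial.C_ne_zero.mpr Polynomial.X_ne_zero) hparam
  exact fun i hi => ⟨fun h0 => (key i hi).1 (by rw [h0, map_zero]), (key i hi).2⟩
end
end

section
/- With the downgrading construction above, the ideals J_i = I_2(ψ) + (h_1,...,h_i) for 1 ≤ i ≤ d are independent of the choice of the columns ∂h_{i-1} at each step: if ∂h_{i-1} and ∂h_{i-1}' both satisfy [x_1 ... x_n]·(column) = h_{i-1}, then the two resulting elements h_i = [y_1 ... y_n]·∂h_{i-1} and h_i' = [y_1 ... y_n]·∂h_{i-1}' differ by an element of I_2(ψ). -/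
open MvPolynomial

set_option maxHeartbeats 1000000
set_option synthInstance.maxHeartbeats 1000000

noncomputable section

variable (k : Type*) [Field k] (n : ℕ)

/-! The syzygies of the regular sequence `x₁, …, xₙ` are spanned by the Koszul syzygies, and
`[y₁ … yₙ]` sends a Koszul syzygy to a 2×2 minor of `ψ`. Concretely, one peels off the last
entry of a syzygy `d`: regularity of `xₘ` modulo `(x₁, …, x_{m-1})` gives `dₘ = ∑ eᵢxᵢ`, and
subtracting the Koszul syzygies with coefficients `eᵢ` leaves a syzygy supported on the first
`m - 1` entries while changing `∑ yᵢdᵢ` only by `∑ eᵢ(xᵢyₘ - xₘyᵢ)`. -/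

theorem MvPolynomial.mem_span_X_image_of_X_mul_mem {σ R : Type*} [CommSemiring R] {i : σ}
    {s : Set σ} (hi : i ∉ s) {f : MvPolynomial σ R}
    (h : X i * f ∈ Ideal.span (X '' s : Set (MvPolynomial σ R))) :
    f ∈ Ideal.span (X '' s : Set (MvPolynomial σ R)) := by
  rw [mem_ideal_span_X_image] at h ⊢
  intro μ hμ
  obtain ⟨j, hjs, hj⟩ := h (Finsupp.single i 1 + μ) (by
    rw [mem_support_iff, coeff_X_mul]
    exact mem_support_iff.mp hμ)
  have hji : i ≠ j := fun e => hi (e ▸ hjs)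
  exact ⟨j, hjs, by simpa [Finsupp.single_apply, hji] using hj⟩

theorem MvPolynomial.mem_map_C_of_C_mul_mem {σ R : Type*} [CommRing R] {I : Ideal R} {a : R}
    (ha : ∀ r, a * r ∈ I → r ∈ I) {f : MvPolynomial σ R}
    (h : C a * f ∈ I.map (C : R →+* MvPolynomial σ R)) :
    f ∈ I.map (C : R →+* MvPolynomial σ R) := by
  rw [mem_map_C_iff] at h ⊢
  exact fun μ => ha _ (by simpa only [coeff_C_mul] using h μ)

theorem sum_mul_mem_span_minors_of_sum_mul_eq_zero {S : Type*} [CommRing S] {m : ℕ}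
    (x y d : Fin m → S)
    (hx : ∀ j : Fin m, ∀ f : S,
      x j * f ∈ Ideal.span (x '' Set.Iio j) → f ∈ Ideal.span (x '' Set.Iio j))
    (hd : ∑ i, x i * d i = 0) :
    ∑ i, y i * d i ∈
      Ideal.span (Set.range fun p : Fin m × Fin m => x p.1 * y p.2 - x p.2 * y p.1) := by
  induction m with
  | zero => simp
  | succ m ih =>
    set x₀ := x ∘ Fin.castSucc
    set y₀ := y ∘ Fin.castSucc
    have hspan_last : x '' Set.Iio (Fin.last m) = Set.range x₀ := by
      rw [Set.range_comp, Fin.range_castSucc]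
      rfl
    rw [Fin.sum_univ_castSucc] at hd ⊢
    have hlast : x (Fin.last m) * d (Fin.last m) ∈ Ideal.span (x '' Set.Iio (Fin.last m)) := by
      rw [eq_neg_of_add_eq_zero_right hd, hspan_last]
      exact neg_mem <| Ideal.sum_mem _ fun i _ =>
        Ideal.mul_mem_right _ _ (Ideal.subset_span ⟨i, rfl⟩)
    obtain ⟨e, he⟩ := Ideal.mem_span_range_iff_exists_fun.mp (hspan_last ▸ hx _ _ hlast)
    have hsyz : ∑ i, x₀ i * (d i.castSucc + x (Fin.last m) * e i) = 0 := by
      rw [← hd, ← he, Finset.mul_sum, ← Finset.sum_add_distrib]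
      exact Finset.sum_congr rfl fun i _ => by simp only [x₀, Function.comp]; ring
    have hreg : ∀ j : Fin m, ∀ f : S,
        x₀ j * f ∈ Ideal.span (x₀ '' Set.Iio j) → f ∈ Ideal.span (x₀ '' Set.Iio j) := by
      intro j
      rw [Set.image_comp, Fin.image_castSucc_Iio]
      exact hx j.castSucc
    have hkoszul : ∑ i : Fin m, y i.castSucc * d i.castSucc + y (Fin.last m) * d (Fin.last m) =
        ∑ i, y₀ i * (d i.castSucc + x (Fin.last m) * e i) +
          ∑ i, e i * (x₀ i * y (Fin.last m) - x (Fin.last m) * y₀ i) := by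
      rw [← he, Finset.mul_sum, ← Finset.sum_add_distrib, ← Finset.sum_add_distrib]
      exact Finset.sum_congr rfl fun i _ => by simp only [x₀, y₀, Function.comp]; ring
    rw [hkoszul]
    refine add_mem (Ideal.span_mono ?_ (ih x₀ y₀ _ hreg hsyz)) <|
      Ideal.sum_mem _ fun (i : Fin m) _ =>
        Ideal.mul_mem_left _ _ (Ideal.subset_span ⟨(i.castSucc, Fin.last m), rfl⟩)
    rintro _ ⟨p, rfl⟩
    exact ⟨(p.1.castSucc, p.2.castSucc), rfl⟩

theorem mem_span_xB_Iio_of_xB_mul_mem (j : Fin n) (f : BB k n)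
    (h : xB k n j * f ∈ Ideal.span (xB k n '' Set.Iio j)) :
    f ∈ Ideal.span (xB k n '' Set.Iio j) := by
  have hspan : Ideal.span (xB k n '' Set.Iio j) =
      (Ideal.span (X '' Set.Iio j)).map (C : RR k n →+* BB k n) := by
    rw [Ideal.map_span, Set.image_image]
    rfl
  rw [hspan] at h ⊢
  exact mem_map_C_of_C_mul_mem (fun _ => mem_span_X_image_of_X_mul_mem Set.self_notMem_Iio) h

theorem downgrade_well_defined
    (c c' : Fin n → BB k n)
    (hcc' : (∑ i, xB k n i * c i) = ∑ i, xB k n i * c' i) :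
    (∑ i, yB k n i * c i) - (∑ i, yB k n i * c' i) ∈ I2ψ k n := by
  have hsyz : ∑ i, xB k n i * (c i - c' i) = 0 := by
    simp only [mul_sub, Finset.sum_sub_distrib, hcc', sub_self]
  simpa only [I2ψ, mul_sub, Finset.sum_sub_distrib] using
    sum_mul_mem_span_minors_of_sum_mul_eq_zero _ (yB k n) _ (mem_span_xB_Iio_of_xB_mul_mem k n) hsyz

end
end

section
/- Let h_1,...,h_d be a downgraded sequence as above, and set J_i = I_2(ψ) + (h_1,...,h_i) and L = J_1 = I_2(ψ) + (h_1). Then for 1 ≤ i ≤ d, J_i ⊆ L : m^{i−1}, where m = (x_1,...,x_n). In particular, modulo I_2(ψ), one has the equality of ideals h_i·m + I_2(ψ) = h_{i−1}·(y_1,...,y_n) + I_2(ψ) for i ≥ 2. -/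
open MvPolynomial

set_option maxHeartbeats 1000000
set_option synthInstance.maxHeartbeats 1000000

noncomputable section

variable (k : Type*) [Field k] (n : ℕ)

/-!
Write `m = (x₁,…,xₙ)`. If `q` is a downgrade of `p` through the column `c`, then
`x_j q - y_j p = ∑ₗ (x_j y_l - x_l y_j) c_l ∈ I₂(ψ)`, so modulo `I₂(ψ)` the ideals `q·m` and
`p·(y₁,…,yₙ)` have the same generators. In particular `h_{j+1}·m ⊆ (h_j) + I₂(ψ)`, and by
induction `h_j·m^j ⊆ (h_0) + I₂(ψ)`; since `m^{i-1} ⊆ m^j` for `j < i`, this gives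
`J_i·m^{i-1} ⊆ L`.
-/

section

variable {S : Type*} [CommRing S] {I : Ideal S}

theorem span_singleton_mul_span_range_sup_eq {ι : Type*} {x y : ι → S} {p q : S}
    (hrel : ∀ j, x j * q - y j * p ∈ I) :
    Ideal.span {q} * Ideal.span (Set.range x) ⊔ I =
      Ideal.span {p} * Ideal.span (Set.range y) ⊔ I := by
  have sup_eq_comap_map (J : Ideal S) :
      J ⊔ I = (J.map (Ideal.Quotient.mk I)).comap (Ideal.Quotient.mk I) := by
    rw [Ideal.comap_map_of_surjective _ Ideal.Quotient.mk_surjective, ← RingHom.ker_eq_comap_bot,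
      Ideal.mk_ker]
  simp only [sup_eq_comap_map, Ideal.span_mul_span', Set.singleton_mul, ← Set.range_comp,
    Ideal.map_span]
  congr 3
  funext j
  exact Ideal.Quotient.eq.mpr (by simpa [mul_comm] using hrel j)

theorem span_singleton_mul_pow_le {m : Ideal S} {d : ℕ} {h : ℕ → S}
    (hstep : ∀ j, j + 1 < d → Ideal.span {h (j + 1)} * m ≤ Ideal.span {h j} ⊔ I) :
    ∀ j < d, Ideal.span {h j} * m ^ j ≤ Ideal.span {h 0} ⊔ I := by
  intro j
  induction j with
  | zero => simp
  | succ j ih =>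
    intro hj
    calc Ideal.span {h (j + 1)} * m ^ (j + 1)
        = Ideal.span {h (j + 1)} * m * m ^ j := by rw [pow_succ']; ring
      _ ≤ (Ideal.span {h j} ⊔ I) * m ^ j := Ideal.mul_mono_left (hstep j hj)
      _ = Ideal.span {h j} * m ^ j ⊔ I * m ^ j := Ideal.sup_mul _ _ _
      _ ≤ Ideal.span {h 0} ⊔ I := sup_le (ih (by omega)) (Ideal.mul_le_left.trans le_sup_right)

theorem sup_span_image_Iio_le_colon {m : Ideal S} {d : ℕ} {h : ℕ → S}
    (hstep : ∀ j, j + 1 < d → Ideal.span {h (j + 1)} * m ≤ Ideal.span {h j} ⊔ I)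
    {i : ℕ} (hi : i ≤ d) :
    I ⊔ Ideal.span (h '' Set.Iio i) ≤
      (I ⊔ Ideal.span {h 0}).colon ((m ^ (i - 1) : Ideal S) : Set S) := by
  refine sup_le (le_sup_left.trans Ideal.le_colon) (Ideal.span_le.mpr ?_)
  rintro _ ⟨j, hj : j < i, rfl⟩
  refine Submodule.mem_colon.mpr fun r hr => ?_
  have hr' : r ∈ m ^ j := Ideal.pow_le_pow_right (show j ≤ i - 1 by omega) hr
  rw [sup_comm]
  exact span_singleton_mul_pow_le hstep j (by omega)
    (Ideal.mul_mem_mul (Ideal.mem_span_singleton_self _) hr')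

end

theorem IsDowngrade.x_mul_sub_y_mul_mem_I2ψ {p q : BB k n} (hpq : IsDowngrade k n p q)
    (j : Fin n) : xB k n j * q - yB k n j * p ∈ I2ψ k n := by
  obtain ⟨c, -, rfl, rfl⟩ := hpq
  rw [Finset.mul_sum, Finset.mul_sum, ← Finset.sum_sub_distrib]
  refine Ideal.sum_mem _ fun i _ => ?_
  rw [show xB k n j * (yB k n i * c i) - yB k n j * (xB k n i * c i)
      = (xB k n j * yB k n i - xB k n i * yB k n j) * c i by ring]
  exact Ideal.mul_mem_right _ _ (Ideal.subset_span ⟨(j, i), rfl⟩)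

theorem IsDowngrade.span_mul_mxB_sup_eq {p q : BB k n} (hpq : IsDowngrade k n p q) :
    Ideal.span {q} * mxB k n ⊔ I2ψ k n =
      Ideal.span {p} * Ideal.span (Set.range (yB k n)) ⊔ I2ψ k n :=
  span_singleton_mul_span_range_sup_eq hpq.x_mul_sub_y_mul_mem_I2ψ

theorem Ji_contained_in_colon
    (d : ℕ) (h : ℕ → BB k n) (hseq : IsDowngradedSeq k n d h) :
    (∀ i : ℕ, 1 ≤ i → i ≤ d →
      I2ψ k n ⊔ Ideal.span (h '' Set.Iio i) ≤
        (I2ψ k n ⊔ Ideal.span {h 0}).colon (((mxB k n) ^ (i - 1) : Ideal (BB k n)) : Set (BB k n))) ∧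
    ∀ i : ℕ, 2 ≤ i → i ≤ d →
      Ideal.span {h (i - 1)} * mxB k n ⊔ I2ψ k n =
        Ideal.span {h (i - 2)} * Ideal.span (Set.range (yB k n)) ⊔ I2ψ k n := by
  have hstep (j : ℕ) (hj : j + 1 < d) :
      Ideal.span {h (j + 1)} * mxB k n ≤ Ideal.span {h j} ⊔ I2ψ k n :=
    (le_sup_left.trans (hseq j hj).span_mul_mxB_sup_eq.le).trans
      (sup_le_sup_right Ideal.mul_le_left _)
  refine ⟨fun i _ hi => sup_span_image_Iio_le_colon hstep hi, fun i hi hid => ?_⟩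
  obtain ⟨j, rfl⟩ : ∃ j, i = j + 2 := ⟨i - 2, by omega⟩
  exact (hseq j (by omega)).span_mul_mxB_sup_eq

end
end

section
/- Let A = R[y_1,...,y_{n+1}]/I_2(ψ) and let \bar{K} be the image of I_2(ψ)+(x_n,y_n). Let h_1,...,h_d be a downgraded sequence starting from h. Then in the domain A, \bar{h_1}·\bar{y_n}^{i−1} = \bar{x_n}^{i−1}·\bar{h_i} for all 1 ≤ i ≤ d, and consequently \bar{h}·\bar{K}^{d−1} = \bar{x_n}^{d−1}·(\bar{h_1},...,\bar{h_d}) as ideals of A. -/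
/-!
For a downgrade step `p = Σ xᵢcᵢ`, `q = Σ yᵢcᵢ` one has `p·yₙ - xₙ·q = Σ (xᵢyₙ - xₙyᵢ)·cᵢ ∈ I₂(ψ)`,
so in `A` consecutive terms satisfy `h̄ⱼ·ȳₙ = x̄ₙ·h̄ⱼ₊₁`. Iterating gives the first claim. For the
second, this relation shows `(h̄₀,…,h̄ₘ)·(x̄ₙ, ȳₙ) = x̄ₙ·(h̄₀,…,h̄ₘ₊₁)`, and induction on `m` gives
`h̄₀·K̄ᵐ = x̄ₙᵐ·(h̄₀,…,h̄ₘ)`.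
-/

open MvPolynomial

set_option maxHeartbeats 1000000
set_option synthInstance.maxHeartbeats 1000000

noncomputable section

variable (k : Type*) [Field k] (n : ℕ)

section ProportionalChain

variable {S : Type*} [CommRing S] {x y : S} {H : ℕ → S} {d : ℕ}

theorem head_mul_pow_eq_pow_mul_of_chain (hH : ∀ j, j + 1 < d → H j * y = x * H (j + 1)) :
    ∀ j, j < d → H 0 * y ^ j = x ^ j * H j
  | 0, _ => by simp
  | j + 1, hj => by
    calc H 0 * y ^ (j + 1) = H 0 * y ^ j * y := by rw [pow_succ, mul_assoc]
      _ = x ^ j * (H j * y) := by rw [head_mul_pow_eq_pow_mul_of_chain hH j (by omega), mul_assoc]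
      _ = x ^ (j + 1) * H (j + 1) := by rw [hH j hj]; ring

theorem span_image_Iio_mul_span_pair_of_chain (hH : ∀ j, j + 1 < d → H j * y = x * H (j + 1))
    {m : ℕ} (hm : m + 1 < d) :
    Ideal.span (H '' Set.Iio (m + 1)) * Ideal.span {x, y} =
      Ideal.span {x} * Ideal.span (H '' Set.Iio (m + 2)) := by
  rw [Ideal.span_mul_span', Ideal.span_mul_span', Set.singleton_mul]
  apply le_antisymm <;> rw [Ideal.span_le]
  · rintro _ ⟨_, ⟨j, hj, rfl⟩, v, hv, rfl⟩
    rw [Set.mem_Iio] at hj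
    dsimp only
    rcases hv with hv | hv <;> rw [hv]
    · exact Ideal.subset_span ⟨H j, ⟨j, Set.mem_Iio.mpr (by omega), rfl⟩, mul_comm _ _⟩
    · rw [hH j (by omega)]
      exact Ideal.subset_span ⟨H (j + 1), ⟨j + 1, Set.mem_Iio.mpr (by omega), rfl⟩, rfl⟩
  · rintro _ ⟨_, ⟨j, hj, rfl⟩, rfl⟩
    rw [Set.mem_Iio] at hj
    rcases Nat.lt_succ_iff_lt_or_eq.mp hj with hj | rfl
    · exact Ideal.subset_span ⟨H j, ⟨j, hj, rfl⟩, x, Set.mem_insert _ _, mul_comm _ _⟩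
    · dsimp only
      rw [← hH m hm]
      exact Ideal.subset_span
        ⟨H m, ⟨m, Set.mem_Iio.mpr (Nat.lt_succ_self m), rfl⟩, y, Set.mem_insert_of_mem _ rfl, rfl⟩

theorem span_singleton_mul_span_pair_pow_of_chain
    (hH : ∀ j, j + 1 < d → H j * y = x * H (j + 1)) :
    ∀ m, m < d →
      Ideal.span {H 0} * Ideal.span {x, y} ^ m =
        Ideal.span {x ^ m} * Ideal.span (H '' Set.Iio (m + 1))
  | 0, _ => by simp
  | m + 1, hm => by
    rw [pow_succ, ← mul_assoc, span_singleton_mul_span_pair_pow_of_chain hH m (by omega),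
      mul_assoc, span_image_Iio_mul_span_pair_of_chain hH hm, ← mul_assoc,
      Ideal.span_singleton_mul_span_singleton, pow_succ]

end ProportionalChain

theorem IsDowngrade.πA_mul_yB_eq {p q : BB k n} (hpq : IsDowngrade k n p q) (l : Fin n) :
    πA k n p * πA k n (yB k n l) = πA k n (xB k n l) * πA k n q := by
  obtain ⟨c, -, rfl, rfl⟩ := hpq
  simp only [πA, ← map_mul, Ideal.Quotient.mk_eq_mk_iff_sub_mem, Finset.sum_mul, Finset.mul_sum,
    ← Finset.sum_sub_distrib]
  refine Ideal.sum_mem _ fun i _ => ?_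
  have hminor : xB k n i * c i * yB k n l - xB k n l * (yB k n i * c i) =
      (xB k n i * yB k n l - xB k n l * yB k n i) * c i := by ring
  exact hminor ▸ Ideal.mul_mem_right _ _ (Ideal.subset_span ⟨(i, l), rfl⟩)

/-- in the domain `A = B/I₂(ψ)`, a downgraded sequence satisfies
`h̄₁·ȳₙ^{i-1} = x̄ₙ^{i-1}·h̄ᵢ` for `1 ≤ i ≤ d`, and consequently
`h̄·K̄^{d-1} = x̄ₙ^{d-1}·(h̄₁,…,h̄_d)` as ideals of `A`. -/
theorem downgraded_sequence_in_A
    (d : ℕ) (hn : 2 ≤ n) (hd : 2 ≤ d)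
    (h : ℕ → BB k n)
    (hseq : IsDowngradedSeq k n d h) :
    (∀ i : ℕ, 1 ≤ i → i ≤ d →
      πA k n (h 0) * (πA k n (yB k n (lastx n (by omega)))) ^ (i - 1) =
        (πA k n (xB k n (lastx n (by omega)))) ^ (i - 1) * πA k n (h (i - 1))) ∧
    Ideal.span {πA k n (h 0)} *
        (Ideal.map (πA k n)
          (Ideal.span {xB k n (lastx n (by omega)), yB k n (lastx n (by omega))})) ^ (d - 1) =
      Ideal.span {(πA k n (xB k n (lastx n (by omega)))) ^ (d - 1)} *
        Ideal.span ((fun j => πA k n (h j)) '' Set.Iio d) := by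
  set x := πA k n (xB k n (lastx n (by omega)))
  set y := πA k n (yB k n (lastx n (by omega)))
  have hchain : ∀ j, j + 1 < d → πA k n (h j) * y = x * πA k n (h (j + 1)) :=
    fun j hj => (hseq j hj).πA_mul_yB_eq k n _
  refine ⟨fun i hi hid =>
    head_mul_pow_eq_pow_mul_of_chain (H := fun j => πA k n (h j)) hchain (i - 1) (by omega), ?_⟩
  rw [Ideal.map_span, Set.image_pair,
    span_singleton_mul_span_pair_pow_of_chain (H := fun j => πA k n (h j)) hchain (d - 1) (by omega),
    Nat.sub_add_cancel (by omega : 1 ≤ d)]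

end
end
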